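/- For a right H-Hopf module M, the composite M^co(H) → M → M/MH⁺ of the inclusion with the quotient map is a linear isomorphism, with inverse induced by m ↦ E_M(m) = m_(0).S(m_(1)). -/

import Mathlib

open TensorProduct

section Base
variable (k : Type) [Field k]

/-- Koszul sign operator on a tensor product, built from parity involutions. -/
noncomputable def koszul {M N : Type} [AddCommGroup M] [Module k M] [AddCommGroup N] [Module k N]
    (J₁ : M →ₗ[k] M) (J₂ : N →ₗ[k] N) : M ⊗[k] N →ₗ[k] M ⊗[k] N :=
  (2:k)⁻¹ • (LinearMap.id + TensorProduct.map J₁ LinearMap.id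
      + TensorProduct.map LinearMap.id J₂ - TensorProduct.map J₁ J₂)

variable (A : Type) [Ring A] [Algebra k A]

/-- Signed ("super") multiplication `(A ⊗ A) ⊗ (A ⊗ A) → A ⊗ A`,
`(a ⊗ b) ⊗ (c ⊗ d) ↦ (−1)^{|b||c|} (ac) ⊗ (bd)`. -/
noncomputable def tensorSuperMul (J : A →ₗ[k] A) :
    (A ⊗[k] A) ⊗[k] (A ⊗[k] A) →ₗ[k] A ⊗[k] A :=
  TensorProduct.map (LinearMap.mul' k A) (LinearMap.mul' k A)
    ∘ₗ koszul k (TensorProduct.map LinearMap.id J) (TensorProduct.map J LinearMap.id)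
    ∘ₗ (TensorProduct.tensorTensorTensorComm k A A A A).toLinearMap

/-- A Hopf superalgebra, encoded by its parity involution `J` (the grading is by
`J`-eigenspaces: even part `{a | J a = a}`, odd part `{a | J a = -a}`). -/
structure HopfSuperData : Type where
  J : A →ₐ[k] A
  J_invol : ∀ a, J (J a) = a
  comul : A →ₗ[k] A ⊗[k] A
  counit : A →ₗ[k] k
  antipode : A →ₗ[k] A
  comul_J : ∀ a, comul (J a) = TensorProduct.map J.toLinearMap J.toLinearMap (comul a)
  counit_J : ∀ a, counit (J a) = counit a
  antipode_J : ∀ a, antipode (J a) = J (antipode a)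
  coassoc : (TensorProduct.assoc k A A A).toLinearMap ∘ₗ comul.rTensor A ∘ₗ comul
      = comul.lTensor A ∘ₗ comul
  rTensor_counit_comul : ∀ a, (TensorProduct.lid k A) (counit.rTensor A (comul a)) = a
  lTensor_counit_comul : ∀ a, (TensorProduct.rid k A) (counit.lTensor A (comul a)) = a
  comul_one : comul 1 = 1 ⊗ₜ[k] 1
  counit_one : counit 1 = 1
  counit_mul : ∀ a b, counit (a * b) = counit a * counit b
  comul_mul : ∀ a b, comul (a * b) = tensorSuperMul k A J.toLinearMap (comul a ⊗ₜ[k] comul b)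
  mul_antipode_rTensor_comul :
      ∀ a, LinearMap.mul' k A (antipode.rTensor A (comul a)) = algebraMap k A (counit a)
  mul_antipode_lTensor_comul :
      ∀ a, LinearMap.mul' k A (antipode.lTensor A (comul a)) = algebraMap k A (counit a)

variable {k A}

namespace HopfSuperData

variable {B : Type} [Ring B] [Algebra k B]

/-- The odd part of a Hopf superalgebra is nonzero. -/
def HasOddPart (H : HopfSuperData k A) : Prop := ∃ a : A, a ≠ 0 ∧ H.J a = -a

/-- Purely even Hopf superalgebras, i.e. ordinary Hopf algebras. -/
def PurelyEven (H : HopfSuperData k A) : Prop := ∀ a : A, H.J a = a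

/-- Even group-like elements. -/
def IsGroupLike (H : HopfSuperData k A) (g : A) : Prop :=
  H.J g = g ∧ H.counit g = 1 ∧ H.comul g = g ⊗ₜ[k] g

/-- An algebra isomorphism is an isomorphism of Hopf superalgebras if it preserves the
grading, the comultiplication and the counit. -/
def IsIso (H : HopfSuperData k A) (H' : HopfSuperData k B) (e : A ≃ₐ[k] B) : Prop :=
  (∀ a, e (H.J a) = H'.J (e a)) ∧
  (∀ a, H'.comul (e a) = TensorProduct.map e.toLinearMap e.toLinearMap (H.comul a)) ∧
  (∀ a, H'.counit (e a) = H.counit a)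

end HopfSuperData

end Base
section Ext
variable {k : Type} [Field k] {A A' : Type} [Ring A] [Algebra k A] [Ring A'] [Algebra k A']

namespace HopfSuperData

/-- The part of the comultiplication whose second tensor leg is even. -/
noncomputable def comulEvenPart (H : HopfSuperData k A) : A →ₗ[k] A ⊗[k] A :=
  (2:k)⁻¹ • (H.comul + H.J.toLinearMap.lTensor A ∘ₗ H.comul)

/-- The part of the comultiplication whose second tensor leg is odd. -/
noncomputable def comulOddPart (H : HopfSuperData k A) : A →ₗ[k] A ⊗[k] A :=
  (2:k)⁻¹ • (H.comul - H.J.toLinearMap.lTensor A ∘ₗ H.comul)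

/-- `J^i` for `i : ZMod 2`. -/
noncomputable def Jpow (H : HopfSuperData k A) (i : ZMod 2) : A →ₗ[k] A :=
  if i = 0 then LinearMap.id else H.J.toLinearMap

/-- `β i a` represents `a # σ^i` in the bosonization `H # k[ℤ/2]`: this predicate says that
an ordinary Hopf algebra `B`, with structural maps given by Mathlib's `HopfAlgebra` class,
is (a realization of) the Radford–Majid bosonization of the Hopf superalgebra `H`. -/
structure IsBosonization {B : Type} [Ring B] [HopfAlgebra k B]
    (H : HopfSuperData k A) (β : ZMod 2 → A →ₗ[k] B) : Prop where
  bij : Function.Bijective fun p : A × A => β 0 p.1 + β 1 p.2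
  map_one : β 0 1 = 1
  map_mul : ∀ (i j : ZMod 2) (a a' : A), β i a * β j a' = β (i + j) (a * H.Jpow i a')
  map_comul : ∀ (i : ZMod 2) (a : A), Coalgebra.comul (β i a) =
      TensorProduct.map (β i) (β i) (H.comulEvenPart a)
      + TensorProduct.map (β (i+1)) (β i) (H.comulOddPart a)
  map_counit : ∀ (i : ZMod 2) (a : A), Coalgebra.counit (β i a) = H.counit a

end HopfSuperData

/-- Evaluation of a bilinear pairing on tensor squares:
`(a ⊗ a') ⊗ (b ⊗ b') ↦ ⟨a,b⟩⟨a',b'⟩`. -/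
noncomputable def pairTensor (Bp : A →ₗ[k] A' →ₗ[k] k) :
    (A ⊗[k] A) ⊗[k] (A' ⊗[k] A') →ₗ[k] k :=
  LinearMap.mul' k k
    ∘ₗ TensorProduct.map (TensorProduct.lift Bp) (TensorProduct.lift Bp)
    ∘ₗ (TensorProduct.tensorTensorTensorComm k A A A' A').toLinearMap

/-- A Hopf (super)pairing between two Hopf superalgebras. -/
structure IsHopfPairing (H : HopfSuperData k A) (H' : HopfSuperData k A')
    (Bp : A →ₗ[k] A' →ₗ[k] k) : Prop where
  parity : ∀ a a', Bp (H.J a) (H'.J a') = Bp a a'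
  pair_mul_right : ∀ (a : A) (b b' : A'),
    Bp a (b * b') = pairTensor Bp (H.comul a ⊗ₜ[k] (b ⊗ₜ[k] b'))
  pair_mul_left : ∀ (a a' : A) (b : A'),
    Bp (a * a') b = pairTensor Bp ((a ⊗ₜ[k] a') ⊗ₜ[k] H'.comul b)
  pair_one_right : ∀ a, Bp a 1 = H.counit a
  pair_one_left : ∀ b, Bp 1 b = H'.counit b

/-- Nondegeneracy of a bilinear pairing. -/
def PairNondeg (Bp : A →ₗ[k] A' →ₗ[k] k) : Prop :=
  (∀ a, (∀ b, Bp a b = 0) → a = 0) ∧ (∀ b, (∀ a, Bp a b = 0) → b = 0)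

end Ext

section Ord
variable (k : Type) [Field k] {A : Type} [AddCommGroup A] [Module k A] [Coalgebra k A]

/-- The right hit action `α ⇀ a = a₍₁₎ α(a₍₂₎)`. -/
noncomputable def hitR (α : A →ₗ[k] k) : A →ₗ[k] A :=
  (TensorProduct.rid k A).toLinearMap ∘ₗ α.lTensor A ∘ₗ Coalgebra.comul

/-- The left hit action `a ↼ α = α(a₍₁₎) a₍₂₎`. -/
noncomputable def hitL (α : A →ₗ[k] k) : A →ₗ[k] A :=
  (TensorProduct.lid k A).toLinearMap ∘ₗ α.rTensor A ∘ₗ Coalgebra.comul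

/-- Convolution product of two functionals on a coalgebra. -/
noncomputable def conv (α β : A →ₗ[k] k) : A →ₗ[k] k :=
  LinearMap.mul' k k ∘ₗ TensorProduct.map α β ∘ₗ Coalgebra.comul

/-- Group-like element of an ordinary coalgebra. -/
def OrdGroupLike (g : A) : Prop :=
  Coalgebra.counit g = (1:k) ∧ Coalgebra.comul g = g ⊗ₜ[k] g

end Ord

section Adm
variable (k : Type) [Field k] {A : Type} [Ring A] [HopfAlgebra k A]

/-- An admissible datum `(g, α)` for a Hopf algebra `A`: `g` is a group-like of order 2,
`α` is a character of convolution-order 2, and `α g = -1`. -/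
def IsAdmissible (g : A) (α : A →ₐ[k] k) : Prop :=
  OrdGroupLike k g ∧ g * g = 1 ∧ g ≠ 1
    ∧ conv k α.toLinearMap α.toLinearMap = Coalgebra.counit
    ∧ α.toLinearMap ≠ Coalgebra.counit ∧ α g = -1

end Adm

section GA
variable (k : Type) [Field k] (M : Type) [Monoid M]

/-- Comultiplication of the group (monoid) algebra: every `of g` is group-like. -/
noncomputable def gaComul : MonoidAlgebra k M →ₗ[k] MonoidAlgebra k M ⊗[k] MonoidAlgebra k M :=
  Finsupp.lsum k (fun g =>
    LinearMap.toSpanSingleton k _ (MonoidAlgebra.of k M g ⊗ₜ[k] MonoidAlgebra.of k M g))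
    ∘ₗ (MonoidAlgebra.coeffLinearEquiv k).toLinearMap

/-- Counit of the group (monoid) algebra. -/
noncomputable def gaCounit : MonoidAlgebra k M →ₗ[k] k :=
  Finsupp.lsum k (fun _ => LinearMap.id) ∘ₗ (MonoidAlgebra.coeffLinearEquiv k).toLinearMap

end GA
section HopfModule
variable (k : Type) [Field k] (H : Type) [Ring H] [HopfAlgebra k H]
  (M : Type) [AddCommGroup M] [Module k M]

/-- A right `H`-Hopf module: simultaneously a right `H`-module and right `H`-comodule such that
`(m.h)₍₀₎ ⊗ (m.h)₍₁₎ = m₍₀₎.h₍₁₎ ⊗ m₍₁₎h₍₂₎`. -/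
structure RightHopfModule : Type where
  act : M →ₗ[k] H →ₗ[k] M
  act_one : ∀ m, act m 1 = m
  act_mul : ∀ m h h', act (act m h) h' = act m (h * h')
  coact : M →ₗ[k] M ⊗[k] H
  coact_coassoc : (TensorProduct.assoc k M H H).toLinearMap ∘ₗ coact.rTensor H ∘ₗ coact
      = (Coalgebra.comul (R := k) (A := H)).lTensor M ∘ₗ coact
  coact_counit : ∀ m,
      (TensorProduct.rid k M) ((Coalgebra.counit (R := k) (A := H)).lTensor M (coact m)) = m
  compat : ∀ (m : M) (h : H), coact (act m h) =
      (TensorProduct.map (TensorProduct.lift act) (LinearMap.mul' k H))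
        ((TensorProduct.tensorTensorTensorComm k M H H H).toLinearMap
          (coact m ⊗ₜ[k] Coalgebra.comul h))

variable {k H M}

namespace RightHopfModule

/-- The coinvariant subspace `M^co(H) = {m | m₍₀₎ ⊗ m₍₁₎ = m ⊗ 1}`. -/
noncomputable def coinv (ρ : RightHopfModule k H M) : Submodule k M :=
  LinearMap.ker (ρ.coact - (TensorProduct.mk k M H).flip 1)

/-- The projection `E_M : m ↦ m₍₀₎.S(m₍₁₎)`. -/
noncomputable def Emap (ρ : RightHopfModule k H M) : M →ₗ[k] M :=
  TensorProduct.lift ρ.act ∘ₗ (HopfAlgebra.antipode (R := k) (A := H)).lTensor M ∘ₗ ρ.coact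

/-- The subspace `M·H⁺`, where `H⁺ = ker ε`. -/
noncomputable def MHplus (ρ : RightHopfModule k H M) : Submodule k M :=
  Submodule.span k {x : M | ∃ (m : M) (h : H), Coalgebra.counit (R := k) h = 0 ∧ x = ρ.act m h}

end RightHopfModule
end HopfModule

set_option synthInstance.maxHeartbeats 400000
set_option maxHeartbeats 1000000
set_option linter.unusedVariables false

namespace HopfAux
open Coalgebra

variable {k : Type} [Field k]
variable {C : Type} [AddCommGroup C] [Module k C] [Coalgebra k C]
variable {B : Type} [Ring B] [Algebra k B]

noncomputable def cv (f g : C →ₗ[k] B) : C →ₗ[k] B :=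
  LinearMap.mul' k B ∘ₗ TensorProduct.map f g ∘ₗ Coalgebra.comul

noncomputable def cu : C →ₗ[k] B := Algebra.linearMap k B ∘ₗ Coalgebra.counit

lemma cu_apply (a : C) : cu (k := k) (B := B) a
    = Coalgebra.counit (R := k) a • (1 : B) := by
  simp [cu, Algebra.algebraMap_eq_smul_one]

lemma cv_repr (f g : C →ₗ[k] B) {a : C} (r : Coalgebra.Repr k a (C × C)) :
    cv f g a = ∑ i ∈ r.index, f (r.left i) * g (r.right i) := by
  simp only [cv, LinearMap.comp_apply, ← r.eq, map_sum, TensorProduct.map_tmul,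
    LinearMap.mul'_apply]

lemma sum_smul_right {a : C} (r : Coalgebra.Repr k a (C × C)) :
    ∑ i ∈ r.index, Coalgebra.counit (R := k) (r.right i) • r.left i = a := by
  have h := Coalgebra.sum_tmul_counit_eq (R := k) r
  have h2 := congrArg (TensorProduct.rid k C) h
  rw [map_sum] at h2
  simp only [TensorProduct.rid_tmul, one_smul] at h2
  exact h2

lemma sum_smul_left {a : C} (r : Coalgebra.Repr k a (C × C)) :
    ∑ i ∈ r.index, Coalgebra.counit (R := k) (r.left i) • r.right i = a := by
  have h := Coalgebra.sum_counit_tmul_eq (R := k) r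
  have h2 := congrArg (TensorProduct.lid k C) h
  rw [map_sum] at h2
  simp only [TensorProduct.lid_tmul, one_smul] at h2
  exact h2

lemma cv_unit_right (f : C →ₗ[k] B) : cv f cu = f := by
  ext a
  rw [cv_repr f cu (ℛ k a)]
  conv_rhs => rw [← sum_smul_right (ℛ k a)]
  rw [map_sum]
  simp only [cu_apply, mul_smul_comm, mul_one, map_smul]

lemma cv_unit_left (f : C →ₗ[k] B) : cv cu f = f := by
  ext a
  rw [cv_repr cu f (ℛ k a)]
  conv_rhs => rw [← sum_smul_left (ℛ k a)]
  rw [map_sum]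
  simp only [cu_apply, smul_mul_assoc, one_mul, map_smul]

lemma mul_assoc_elem (z : B ⊗[k] (B ⊗[k] B)) :
    LinearMap.mul' k B (TensorProduct.map (LinearMap.mul' k B) LinearMap.id
      ((TensorProduct.assoc k B B B).symm z))
    = LinearMap.mul' k B (TensorProduct.map LinearMap.id (LinearMap.mul' k B) z) := by
  induction z with
  | zero => simp only [map_zero]
  | tmul x w =>
      induction w with
      | zero => simp only [tmul_zero, map_zero]
      | tmul y z' =>
          simp only [assoc_symm_tmul, map_tmul, LinearMap.mul'_apply, LinearMap.id_coe, id_eq]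
          rw [mul_assoc]
      | add u v hu hv => simp only [tmul_add, map_add, hu, hv]
  | add u v hu hv => simp only [map_add, hu, hv]

lemma cv_assoc (f g h : C →ₗ[k] B) : cv (cv f g) h = cv f (cv g h) := by
  have e1 : TensorProduct.map (cv f g) h
      = (TensorProduct.map (LinearMap.mul' k B) LinearMap.id
          ∘ₗ TensorProduct.map (TensorProduct.map f g) h)
        ∘ₗ (Coalgebra.comul (R := k) (A := C)).rTensor C := by
    rw [LinearMap.rTensor, ← TensorProduct.map_comp, ← TensorProduct.map_comp]
    simp only [cv, LinearMap.comp_id, LinearMap.id_comp, LinearMap.comp_assoc]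
  have e2 : TensorProduct.map f (cv g h)
      = (TensorProduct.map LinearMap.id (LinearMap.mul' k B)
          ∘ₗ TensorProduct.map f (TensorProduct.map g h))
        ∘ₗ (Coalgebra.comul (R := k) (A := C)).lTensor C := by
    rw [LinearMap.lTensor, ← TensorProduct.map_comp, ← TensorProduct.map_comp]
    simp only [cv, LinearMap.comp_id, LinearMap.id_comp, LinearMap.comp_assoc]
  ext a
  calc cv (cv f g) h a
      = LinearMap.mul' k B (TensorProduct.map (cv f g) h (Coalgebra.comul a)) := rfl
    _ = LinearMap.mul' k B (TensorProduct.map (LinearMap.mul' k B) LinearMap.id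
          (TensorProduct.map (TensorProduct.map f g) h
            ((Coalgebra.comul (R := k)).rTensor C (Coalgebra.comul a)))) := by
        rw [e1]; rfl
    _ = LinearMap.mul' k B (TensorProduct.map (LinearMap.mul' k B) LinearMap.id
          (TensorProduct.map (TensorProduct.map f g) h
            ((TensorProduct.assoc k C C C).symm
              ((Coalgebra.comul (R := k)).lTensor C (Coalgebra.comul a))))) := by
        rw [Coalgebra.coassoc_symm_apply]
    _ = LinearMap.mul' k B (TensorProduct.map (LinearMap.mul' k B) LinearMap.id
          ((TensorProduct.assoc k B B B).symm
            (TensorProduct.map f (TensorProduct.map g h)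
              ((Coalgebra.comul (R := k)).lTensor C (Coalgebra.comul a))))) := by
        rw [TensorProduct.map_map_assoc_symm]
    _ = LinearMap.mul' k B (TensorProduct.map LinearMap.id (LinearMap.mul' k B)
          (TensorProduct.map f (TensorProduct.map g h)
            ((Coalgebra.comul (R := k)).lTensor C (Coalgebra.comul a)))) :=
        mul_assoc_elem _
    _ = LinearMap.mul' k B (TensorProduct.map f (cv g h) (Coalgebra.comul a)) := by
        rw [e2]; rfl
    _ = cv f (cv g h) a := rfl

lemma cv_cancel {f g h : C →ₗ[k] B} (h1 : cv f g = cu) (h2 : cv g h = cu) : f = h := by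
  have : cv f (cv g h) = cv (cv f g) h := (cv_assoc f g h).symm
  rw [h1, h2, cv_unit_right, cv_unit_left] at this
  exact this


lemma sum_repr_coassoc {a : C} (r : Coalgebra.Repr k a (C × C)) :
    ∑ i ∈ r.index, Coalgebra.comul (R := k) (r.left i) ⊗ₜ[k] r.right i
    = (TensorProduct.assoc k C C C).symm
        (∑ i ∈ r.index, r.left i ⊗ₜ[k] Coalgebra.comul (R := k) (r.right i)) := by
  have h1 : (Coalgebra.comul (R := k)).rTensor C (Coalgebra.comul a)
      = ∑ i ∈ r.index, Coalgebra.comul (R := k) (r.left i) ⊗ₜ[k] r.right i := by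
    rw [← r.eq, map_sum]; simp only [LinearMap.rTensor_tmul]
  have h2 : (Coalgebra.comul (R := k)).lTensor C (Coalgebra.comul a)
      = ∑ i ∈ r.index, r.left i ⊗ₜ[k] Coalgebra.comul (R := k) (r.right i) := by
    rw [← r.eq, map_sum]; simp only [LinearMap.lTensor_tmul]
  rw [← h1, ← h2, Coalgebra.coassoc_symm_apply]


section Hopf
variable {H : Type} [Ring H] [HopfAlgebra k H]

local notation "Sa" => HopfAlgebra.antipode (R := k) (A := H)
local notation "ε" => Coalgebra.counit (R := k)

lemma antipode_one : Sa (1 : H) = 1 := by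
  have h := HopfAlgebra.mul_antipode_rTensor_comul_apply (R := k) (A := H) (a := 1)
  rw [Bialgebra.comul_one] at h
  simpa [Algebra.TensorProduct.one_def] using h

lemma counit_antipode (a : H) : ε (Sa a) = ε a := by
  classical
  set r := ℛ k a
  have h := congrArg (Coalgebra.counit (R := k)) (HopfAlgebra.sum_antipode_mul_eq_algebraMap_counit (R := k) r)
  rw [map_sum, Bialgebra.counit_algebraMap] at h
  simp only [Bialgebra.counit_mul] at h
  calc ε (Sa a) = ε (Sa (∑ i ∈ r.index, ε (r.right i) • r.left i)) := by rw [sum_smul_right r]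
    _ = ∑ i ∈ r.index, ε (r.right i) • ε (Sa (r.left i)) := by rw [map_sum, map_sum]; simp only [map_smul]
    _ = ∑ i ∈ r.index, ε (Sa (r.left i)) * ε (r.right i) := by
        refine Finset.sum_congr rfl fun i _ => ?_; rw [smul_eq_mul, mul_comm]
    _ = ε a := h

lemma antipode_mul (a b : H) : Sa (a * b) = Sa b * Sa a := by
  classical
  set F : H ⊗[k] H →ₗ[k] H := Sa ∘ₗ LinearMap.mul' k H with hF
  set G : H ⊗[k] H →ₗ[k] H := LinearMap.mul' k H with hG
  set K : H ⊗[k] H →ₗ[k] H :=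
    LinearMap.mul' k H ∘ₗ TensorProduct.map Sa Sa ∘ₗ (TensorProduct.comm k H H).toLinearMap with hK
  have mulmul_ttt : ∀ u v : H ⊗[k] H,
      TensorProduct.map (LinearMap.mul' k H) (LinearMap.mul' k H)
        (TensorProduct.tensorTensorTensorComm k H H H H (u ⊗ₜ[k] v)) = u * v := by
    intro u v
    induction u with
    | zero => simp [zero_tmul]
    | tmul x y =>
        induction v with
        | zero => simp [tmul_zero]
        | tmul z w =>
            simp only [tensorTensorTensorComm_tmul, map_tmul, LinearMap.mul'_apply,
              Algebra.TensorProduct.tmul_mul_tmul]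
        | add u1 u2 h1 h2 => simp only [tmul_add, map_add, h1, h2, mul_add]
    | add u1 u2 h1 h2 => simp only [add_tmul, map_add, h1, h2, add_mul]
  have step1 : cv F G = cu := by
    apply TensorProduct.ext'
    intro x y
    have hc : Coalgebra.comul (R := k) (x ⊗ₜ[k] y)
        = TensorProduct.tensorTensorTensorComm k H H H H
            (Coalgebra.comul (R := k) x ⊗ₜ[k] Coalgebra.comul (R := k) y) := rfl
    have e : TensorProduct.map F G
        = TensorProduct.map Sa LinearMap.id
            ∘ₗ TensorProduct.map (LinearMap.mul' k H) (LinearMap.mul' k H) := by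
      rw [← TensorProduct.map_comp, LinearMap.id_comp]
    calc cv F G (x ⊗ₜ[k] y)
        = LinearMap.mul' k H (TensorProduct.map F G (Coalgebra.comul (R := k) (x ⊗ₜ[k] y))) := rfl
      _ = LinearMap.mul' k H (TensorProduct.map Sa LinearMap.id
            (Coalgebra.comul (R := k) (x * y))) := by
          rw [e, hc]
          simp only [LinearMap.comp_apply, mulmul_ttt, ← Bialgebra.comul_mul]
      _ = algebraMap k H (ε (x * y)) := by
          rw [show TensorProduct.map Sa LinearMap.id = (Sa).rTensor H from rfl,
            HopfAlgebra.mul_antipode_rTensor_comul_apply]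
      _ = cu (x ⊗ₜ[k] y) := by
          simp only [cu, LinearMap.comp_apply, Algebra.linearMap_apply]
          congr 1
          rw [TensorProduct.counit_tmul, smul_eq_mul, mul_comm, Bialgebra.counit_mul]
  have step2 : cv G K = cu := by
    apply TensorProduct.ext'
    intro x y
    classical
    set ra := ℛ k x
    set rb := ℛ k y
    have hc : Coalgebra.comul (R := k) (x ⊗ₜ[k] y)
        = ∑ i ∈ ra.index, ∑ j ∈ rb.index,
            (ra.left i ⊗ₜ[k] rb.left j) ⊗ₜ[k] (ra.right i ⊗ₜ[k] rb.right j) := by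
      show TensorProduct.tensorTensorTensorComm k H H H H
          (Coalgebra.comul (R := k) x ⊗ₜ[k] Coalgebra.comul (R := k) y) = _
      rw [← ra.eq, ← rb.eq, sum_tmul]
      rw [map_sum]
      refine Finset.sum_congr rfl fun i _ => ?_
      rw [tmul_sum, map_sum]
      refine Finset.sum_congr rfl fun j _ => ?_
      simp only [tensorTensorTensorComm_tmul]
    have : cv G K (x ⊗ₜ[k] y) = ∑ i ∈ ra.index, ∑ j ∈ rb.index,
        (ra.left i * rb.left j) * (Sa (rb.right j) * Sa (ra.right i)) := by
      show LinearMap.mul' k H (TensorProduct.map G K (Coalgebra.comul (R := k) (x ⊗ₜ[k] y))) = _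
      rw [hc]; simp only [map_sum]
      refine Finset.sum_congr rfl fun i _ => ?_
      refine Finset.sum_congr rfl fun j _ => ?_
      simp only [map_tmul, LinearMap.mul'_apply, hG, hK, LinearMap.comp_apply,
        LinearEquiv.coe_coe, comm_tmul]
    rw [this]
    have inner : ∀ i ∈ ra.index, ∑ j ∈ rb.index,
        (ra.left i * rb.left j) * (Sa (rb.right j) * Sa (ra.right i))
        = ε y • (ra.left i * Sa (ra.right i)) := by
      intro i _
      have : ∀ j ∈ rb.index, (ra.left i * rb.left j) * (Sa (rb.right j) * Sa (ra.right i))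
          = ra.left i * ((rb.left j * Sa (rb.right j)) * Sa (ra.right i)) := by
        intro j _; rw [mul_assoc, mul_assoc]
      rw [Finset.sum_congr rfl this, ← Finset.mul_sum, ← Finset.sum_mul,
        HopfAlgebra.sum_mul_antipode_eq_smul rb, smul_mul_assoc, one_mul, mul_smul_comm]
    rw [Finset.sum_congr rfl inner, ← Finset.smul_sum,
      HopfAlgebra.sum_mul_antipode_eq_smul ra, cu_apply]
    simp only [TensorProduct.counit_tmul, LinearMap.comp_apply,
      map_tmul, LinearMap.mul'_apply, smul_eq_mul]
    rw [smul_smul, mul_comm]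
  have hFK : F = K := cv_cancel step1 step2
  have := congrArg (fun f : H ⊗[k] H →ₗ[k] H => f (a ⊗ₜ[k] b)) hFK
  simpa [hF, hG, hK, LinearMap.mul'_apply] using this


lemma antipode_comul (a : H) :
    Coalgebra.comul (R := k) (Sa a)
    = (TensorProduct.comm k H H)
        (TensorProduct.map Sa Sa (Coalgebra.comul (R := k) a)) := by
  classical
  set F2 : H →ₗ[k] H ⊗[k] H := Coalgebra.comul ∘ₗ Sa with hF2
  set g2 : H →ₗ[k] H ⊗[k] H := Coalgebra.comul with hg2
  set K2 : H →ₗ[k] H ⊗[k] H :=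
    (TensorProduct.comm k H H).toLinearMap ∘ₗ TensorProduct.map Sa Sa ∘ₗ Coalgebra.comul with hK2
  have step1 : cv F2 g2 = cu := by
    ext x
    set r := ℛ k x
    calc cv F2 g2 x = ∑ i ∈ r.index,
          Coalgebra.comul (R := k) (Sa (r.left i)) * Coalgebra.comul (R := k) (r.right i) := by
          rw [cv_repr F2 g2 r]; rfl
      _ = Coalgebra.comul (R := k) (∑ i ∈ r.index, Sa (r.left i) * r.right i) := by
          rw [map_sum]
          exact Finset.sum_congr rfl fun i _ => (Bialgebra.comul_mul _ _).symm
      _ = Coalgebra.comul (R := k) (algebraMap k H (ε x)) := by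
          rw [HopfAlgebra.sum_antipode_mul_eq_algebraMap_counit r]
      _ = algebraMap k (H ⊗[k] H) (ε x) := Bialgebra.comul_algebraMap _
      _ = cu x := by simp only [cu, LinearMap.comp_apply, Algebra.linearMap_apply]
  have step2 : cv g2 K2 = cu := by
    ext x
    set r := ℛ k x
    set P : (H ⊗[k] H) ⊗[k] H →ₗ[k] H ⊗[k] H :=
      LinearMap.mul' k (H ⊗[k] H) ∘ₗ TensorProduct.map LinearMap.id K2 with hP
    have hPapp : ∀ (u : H ⊗[k] H) (z : H), P (u ⊗ₜ[k] z) = u * K2 z := by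
      intro u z
      simp only [hP, LinearMap.comp_apply, map_tmul, LinearMap.id_coe, id_eq,
        LinearMap.mul'_apply]
    set W : H → (H ⊗[k] (H ⊗[k] H)) →ₗ[k] H ⊗[k] H := fun x0 =>
      LinearMap.mul' k (H ⊗[k] H) ∘ₗ TensorProduct.map (TensorProduct.mk k H H x0)
        ((TensorProduct.comm k H H).toLinearMap ∘ₗ TensorProduct.map Sa Sa) with hW
    have claimA : ∀ (x0 : H) (w : H ⊗[k] H),
        P ((TensorProduct.assoc k H H H).symm (x0 ⊗ₜ[k] w))
        = W x0 ((Coalgebra.comul (R := k)).lTensor H w) := by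
      intro x0 w
      induction w with
      | zero => simp only [tmul_zero, map_zero]
      | tmul y z =>
          rw [assoc_symm_tmul, hPapp, LinearMap.lTensor_tmul]
          simp only [hW, hK2, LinearMap.comp_apply, map_tmul, mk_apply,
            LinearMap.mul'_apply, LinearEquiv.coe_coe]
      | add u v hu hv => simp only [tmul_add, map_add, hu, hv]
    have claimB : ∀ (x0 z : H) (u : H ⊗[k] H),
        W x0 ((TensorProduct.assoc k H H H) (u ⊗ₜ[k] z))
        = (x0 * Sa z) ⊗ₜ[k] (LinearMap.mul' k H ((Sa).lTensor H u)) := by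
      intro x0 z u
      induction u with
      | zero => simp only [zero_tmul, map_zero, tmul_zero]
      | tmul y1 y2 =>
          rw [assoc_tmul]
          simp only [hW, LinearMap.comp_apply, map_tmul, mk_apply, LinearEquiv.coe_coe,
            comm_tmul, LinearMap.mul'_apply, Algebra.TensorProduct.tmul_mul_tmul,
            LinearMap.lTensor_tmul]
      | add u v hu hv => simp only [add_tmul, map_add, hu, hv, tmul_add]
    have inner : ∀ i ∈ r.index,
        P ((TensorProduct.assoc k H H H).symm
            (r.left i ⊗ₜ[k] Coalgebra.comul (R := k) (r.right i)))
        = (r.left i * Sa (r.right i)) ⊗ₜ[k] (1 : H) := by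
      intro i _
      set s := ℛ k (r.right i)
      calc P ((TensorProduct.assoc k H H H).symm
              (r.left i ⊗ₜ[k] Coalgebra.comul (R := k) (r.right i)))
          = W (r.left i) ((Coalgebra.comul (R := k)).lTensor H
              (Coalgebra.comul (R := k) (r.right i))) := claimA _ _
        _ = W (r.left i) ((TensorProduct.assoc k H H H)
              ((Coalgebra.comul (R := k)).rTensor H (Coalgebra.comul (R := k) (r.right i)))) := by
            rw [Coalgebra.coassoc_apply]
        _ = ∑ j ∈ s.index, W (r.left i) ((TensorProduct.assoc k H H H)
              (Coalgebra.comul (R := k) (s.left j) ⊗ₜ[k] s.right j)) := by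
            rw [← s.eq, map_sum, map_sum, map_sum]
            exact Finset.sum_congr rfl fun j _ => by rw [LinearMap.rTensor_tmul]
        _ = ∑ j ∈ s.index, ε (s.left j) •
              ((r.left i * Sa (s.right j)) ⊗ₜ[k] (1 : H)) := by
            refine Finset.sum_congr rfl fun j _ => ?_
            rw [claimB, HopfAlgebra.mul_antipode_lTensor_comul_apply,
              Algebra.algebraMap_eq_smul_one, tmul_smul]
        _ = (∑ j ∈ s.index, ε (s.left j) • (r.left i * Sa (s.right j))) ⊗ₜ[k] (1 : H) := by
            rw [sum_tmul]
            exact Finset.sum_congr rfl fun j _ => by rw [smul_tmul']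
        _ = (r.left i * Sa (r.right i)) ⊗ₜ[k] (1 : H) := by
            congr 1
            have h1 := congrArg (fun t => r.left i * Sa t) (sum_smul_left s)
            simp only [map_sum, map_smul, Finset.mul_sum, mul_smul_comm] at h1
            convert h1 using 2
    calc cv g2 K2 x
        = ∑ i ∈ r.index, Coalgebra.comul (R := k) (r.left i) * K2 (r.right i) := by
          rw [cv_repr g2 K2 r]
      _ = ∑ i ∈ r.index, P (Coalgebra.comul (R := k) (r.left i) ⊗ₜ[k] r.right i) :=
          Finset.sum_congr rfl fun i _ => (hPapp _ _).symm
      _ = P (∑ i ∈ r.index, Coalgebra.comul (R := k) (r.left i) ⊗ₜ[k] r.right i) := by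
          rw [map_sum]
      _ = P ((TensorProduct.assoc k H H H).symm
            (∑ i ∈ r.index, r.left i ⊗ₜ[k] Coalgebra.comul (R := k) (r.right i))) := by
          rw [sum_repr_coassoc r]
      _ = ∑ i ∈ r.index, P ((TensorProduct.assoc k H H H).symm
            (r.left i ⊗ₜ[k] Coalgebra.comul (R := k) (r.right i))) := by
          rw [map_sum, map_sum]
      _ = ∑ i ∈ r.index, (r.left i * Sa (r.right i)) ⊗ₜ[k] (1 : H) :=
          Finset.sum_congr rfl inner
      _ = (∑ i ∈ r.index, r.left i * Sa (r.right i)) ⊗ₜ[k] (1 : H) := by rw [sum_tmul]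
      _ = (ε x • (1 : H)) ⊗ₜ[k] (1 : H) := by rw [HopfAlgebra.sum_mul_antipode_eq_smul r]
      _ = cu x := by
          rw [cu_apply, Algebra.TensorProduct.one_def, smul_tmul']
  have hFK : F2 = K2 := cv_cancel step1 step2
  have := congrArg (fun f : H →ₗ[k] H ⊗[k] H => f a) hFK
  simpa [hF2, hK2] using this

end Hopf

section Mod
variable {H : Type} [Ring H] [HopfAlgebra k H]
variable {M : Type} [AddCommGroup M] [Module k M] (ρ : RightHopfModule k H M)

local notation "Sa" => HopfAlgebra.antipode (R := k) (A := H)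
local notation "ε" => Coalgebra.counit (R := k)

lemma Emap_eq {m : M} {s : Finset (M × H)} (hs : ρ.coact m = ∑ p ∈ s, p.1 ⊗ₜ[k] p.2) :
    RightHopfModule.Emap ρ m = ∑ p ∈ s, ρ.act p.1 (Sa p.2) := by
  simp only [RightHopfModule.Emap, LinearMap.comp_apply, hs, map_sum,
    LinearMap.lTensor_tmul, lift.tmul]

lemma counit_elem {m : M} {s : Finset (M × H)} (hs : ρ.coact m = ∑ p ∈ s, p.1 ⊗ₜ[k] p.2) :
    ∑ p ∈ s, ε p.2 • p.1 = m := by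
  have h := ρ.coact_counit m
  rw [hs, map_sum, map_sum] at h
  simpa only [LinearMap.lTensor_tmul, TensorProduct.rid_tmul] using h

lemma coassoc_elem {m : M} {s : Finset (M × H)} (hs : ρ.coact m = ∑ p ∈ s, p.1 ⊗ₜ[k] p.2) :
    ∑ p ∈ s, ρ.coact p.1 ⊗ₜ[k] p.2
    = (TensorProduct.assoc k M H H).symm
        (∑ p ∈ s, p.1 ⊗ₜ[k] Coalgebra.comul (R := k) p.2) := by
  have h := LinearMap.congr_fun ρ.coact_coassoc m
  simp only [LinearMap.comp_apply, LinearEquiv.coe_coe] at h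
  rw [hs, map_sum, map_sum, map_sum] at h
  simp only [LinearMap.rTensor_tmul, LinearMap.lTensor_tmul] at h
  rw [LinearEquiv.eq_symm_apply, map_sum]
  exact h

lemma compat_elem {m : M} {s : Finset (M × H)} (hs : ρ.coact m = ∑ p ∈ s, p.1 ⊗ₜ[k] p.2)
    {h : H} (r : Coalgebra.Repr k h (H × H)) :
    ρ.coact (ρ.act m h) = ∑ p ∈ s, ∑ j ∈ r.index,
      ρ.act p.1 (r.left j) ⊗ₜ[k] (p.2 * r.right j) := by
  rw [ρ.compat m h, hs, ← r.eq]
  rw [sum_tmul]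
  simp only [map_sum]
  refine Finset.sum_congr rfl fun p _ => ?_
  rw [tmul_sum]
  simp only [map_sum]
  refine Finset.sum_congr rfl fun j _ => ?_
  simp only [LinearEquiv.coe_coe, tensorTensorTensorComm_tmul, map_tmul, lift.tmul,
    LinearMap.mul'_apply]

lemma Emap_coinv {m : M} (hm : ρ.coact m = m ⊗ₜ[k] (1 : H)) :
    RightHopfModule.Emap ρ m = m := by
  simp only [RightHopfModule.Emap, LinearMap.comp_apply, hm, LinearMap.lTensor_tmul,
    lift.tmul, antipode_one, ρ.act_one]

lemma Emap_act (m : M) (h : H) :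
    RightHopfModule.Emap ρ (ρ.act m h) = ε h • RightHopfModule.Emap ρ m := by
  classical
  obtain ⟨s, hs⟩ := TensorProduct.exists_finset (ρ.coact m)
  set r := ℛ k h
  have hc := compat_elem ρ hs r
  have hlhs : RightHopfModule.Emap ρ (ρ.act m h) = ∑ p ∈ s, ∑ j ∈ r.index,
      ρ.act (ρ.act p.1 (r.left j)) (Sa (p.2 * r.right j)) := by
    rw [RightHopfModule.Emap, LinearMap.comp_apply, LinearMap.comp_apply, hc]
    simp only [map_sum, LinearMap.lTensor_tmul, lift.tmul]
  rw [hlhs, Emap_eq ρ hs, Finset.smul_sum]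
  refine Finset.sum_congr rfl fun p _ => ?_
  calc ∑ j ∈ r.index, ρ.act (ρ.act p.1 (r.left j)) (Sa (p.2 * r.right j))
      = ∑ j ∈ r.index, ρ.act p.1 ((r.left j * Sa (r.right j)) * Sa p.2) := by
        refine Finset.sum_congr rfl fun j _ => ?_
        rw [ρ.act_mul, antipode_mul, ← mul_assoc]
    _ = ρ.act p.1 ((∑ j ∈ r.index, r.left j * Sa (r.right j)) * Sa p.2) := by
        rw [Finset.sum_mul, map_sum]
    _ = ε h • ρ.act p.1 (Sa p.2) := by
        rw [HopfAlgebra.sum_mul_antipode_eq_smul r, smul_mul_assoc, one_mul, map_smul]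

lemma Emap_MHplus_zero {x : M} (hx : x ∈ RightHopfModule.MHplus ρ) :
    RightHopfModule.Emap ρ x = 0 := by
  refine Submodule.span_induction ?_ ?_ ?_ ?_ hx
  · rintro y ⟨m, h, hεh, rfl⟩
    rw [Emap_act, hεh, zero_smul]
  · exact map_zero _
  · intro y z _ _ hy hz
    rw [map_add, hy, hz, add_zero]
  · intro c y _ hy
    rw [map_smul, hy, smul_zero]

lemma Emap_sub_mem (m : M) :
    RightHopfModule.Emap ρ m - m ∈ RightHopfModule.MHplus ρ := by
  classical
  obtain ⟨s, hs⟩ := TensorProduct.exists_finset (ρ.coact m)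
  have hm : RightHopfModule.Emap ρ m - m
      = ∑ p ∈ s, ρ.act p.1 (Sa p.2 - ε p.2 • 1) := by
    have hm' := counit_elem ρ hs
    rw [Emap_eq ρ hs, ← hm', ← Finset.sum_sub_distrib]
    refine Finset.sum_congr rfl fun p _ => ?_
    rw [map_sub, map_smul, ρ.act_one]
  rw [hm]
  refine Submodule.sum_mem _ fun p _ => Submodule.subset_span ?_
  refine ⟨p.1, Sa p.2 - ε p.2 • 1, ?_, rfl⟩
  rw [map_sub, map_smul, counit_antipode, Bialgebra.counit_one, smul_eq_mul, mul_one, sub_self]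

lemma Emap_coact (m : M) :
    ρ.coact (RightHopfModule.Emap ρ m) = RightHopfModule.Emap ρ m ⊗ₜ[k] (1 : H) := by
  classical
  obtain ⟨s, hs⟩ := TensorProduct.exists_finset (ρ.coact m)
  set Φ : (M ⊗[k] H) ⊗[k] H →ₗ[k] M ⊗[k] H :=
    TensorProduct.map (TensorProduct.lift ρ.act) (LinearMap.mul' k H)
      ∘ₗ (TensorProduct.tensorTensorTensorComm k M H H H).toLinearMap
      ∘ₗ LinearMap.lTensor (M ⊗[k] H) (Coalgebra.comul ∘ₗ Sa) with hΦ
  have hΦapp : ∀ (u : M ⊗[k] H) (z : H), Φ (u ⊗ₜ[k] z)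
      = TensorProduct.map (TensorProduct.lift ρ.act) (LinearMap.mul' k H)
          ((TensorProduct.tensorTensorTensorComm k M H H H)
            (u ⊗ₜ[k] Coalgebra.comul (R := k) (Sa z))) := by
    intro u z
    simp only [hΦ, LinearMap.comp_apply, LinearMap.lTensor_tmul, LinearEquiv.coe_coe]
  set Ψ : M → H ⊗[k] (H ⊗[k] H) →ₗ[k] M ⊗[k] H := fun m' =>
    TensorProduct.map (ρ.act m' ∘ₗ Sa) (LinearMap.mul' k H ∘ₗ LinearMap.lTensor H Sa)
      ∘ₗ (TensorProduct.comm k (H ⊗[k] H) H).toLinearMap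
      ∘ₗ (TensorProduct.assoc k H H H).symm.toLinearMap with hΨ
  have claimA : ∀ (m' : M) (w : H ⊗[k] H),
      Φ ((TensorProduct.assoc k M H H).symm (m' ⊗ₜ[k] w))
      = Ψ m' ((Coalgebra.comul (R := k)).lTensor H w) := by
    intro m' w
    induction w with
    | zero => simp only [tmul_zero, map_zero]
    | tmul x y =>
        rw [assoc_symm_tmul, hΦapp, LinearMap.lTensor_tmul, antipode_comul]
        induction (Coalgebra.comul (R := k) y) with
        | zero => simp only [map_zero, tmul_zero]
        | tmul c d =>
            simp only [hΨ, map_tmul, LinearEquiv.coe_coe, comm_tmul, assoc_symm_tmul,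
              tensorTensorTensorComm_tmul, LinearMap.comp_apply, lift.tmul,
              LinearMap.lTensor_tmul, LinearMap.mul'_apply]
        | add u v hu hv => simp only [map_add, tmul_add, hu, hv]
    | add u v hu hv => simp only [tmul_add, map_add, hu, hv]
  have claimB : ∀ (m' : M) (z : H) (u : H ⊗[k] H),
      Ψ m' ((TensorProduct.assoc k H H H) (u ⊗ₜ[k] z))
      = (ρ.act m' (Sa z)) ⊗ₜ[k] (LinearMap.mul' k H ((Sa).lTensor H u)) := by
    intro m' z u
    induction u with
    | zero => simp only [zero_tmul, map_zero, tmul_zero]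
    | tmul y1 y2 =>
        rw [assoc_tmul]
        simp only [hΨ, LinearMap.comp_apply, LinearEquiv.coe_coe, assoc_symm_tmul,
          comm_tmul, map_tmul, LinearMap.lTensor_tmul, LinearMap.mul'_apply, lift.tmul]
    | add u v hu hv => simp only [add_tmul, map_add, hu, hv, tmul_add]
  have key : ∀ p : M × H,
      Φ ((TensorProduct.assoc k M H H).symm (p.1 ⊗ₜ[k] Coalgebra.comul (R := k) p.2))
      = (ρ.act p.1 (Sa p.2)) ⊗ₜ[k] (1 : H) := by
    intro p
    classical
    set s2 := ℛ k p.2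
    calc Φ ((TensorProduct.assoc k M H H).symm (p.1 ⊗ₜ[k] Coalgebra.comul (R := k) p.2))
        = Ψ p.1 ((Coalgebra.comul (R := k)).lTensor H (Coalgebra.comul (R := k) p.2)) :=
          claimA _ _
      _ = Ψ p.1 ((TensorProduct.assoc k H H H)
            ((Coalgebra.comul (R := k)).rTensor H (Coalgebra.comul (R := k) p.2))) := by
          rw [Coalgebra.coassoc_apply]
      _ = ∑ j ∈ s2.index, Ψ p.1 ((TensorProduct.assoc k H H H)
            (Coalgebra.comul (R := k) (s2.left j) ⊗ₜ[k] s2.right j)) := by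
          rw [← s2.eq, map_sum, map_sum, map_sum]
          exact Finset.sum_congr rfl fun j _ => by rw [LinearMap.rTensor_tmul]
      _ = ∑ j ∈ s2.index, ε (s2.left j) • ((ρ.act p.1 (Sa (s2.right j))) ⊗ₜ[k] (1 : H)) := by
          refine Finset.sum_congr rfl fun j _ => ?_
          rw [claimB, HopfAlgebra.mul_antipode_lTensor_comul_apply,
            Algebra.algebraMap_eq_smul_one, tmul_smul]
      _ = (∑ j ∈ s2.index, ε (s2.left j) • ρ.act p.1 (Sa (s2.right j))) ⊗ₜ[k] (1 : H) := by
          rw [sum_tmul]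
          exact Finset.sum_congr rfl fun j _ => by rw [smul_tmul']
      _ = (ρ.act p.1 (Sa p.2)) ⊗ₜ[k] (1 : H) := by
          congr 1
          have h1 := congrArg (fun t => ρ.act p.1 (Sa t)) (sum_smul_left s2)
          simp only [map_sum, map_smul] at h1
          exact h1
  calc ρ.coact (RightHopfModule.Emap ρ m)
      = ∑ p ∈ s, ρ.coact (ρ.act p.1 (Sa p.2)) := by rw [Emap_eq ρ hs, map_sum]
    _ = ∑ p ∈ s, Φ (ρ.coact p.1 ⊗ₜ[k] p.2) := by
        refine Finset.sum_congr rfl fun p _ => ?_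
        rw [hΦapp]
        exact ρ.compat p.1 (Sa p.2)
    _ = Φ (∑ p ∈ s, ρ.coact p.1 ⊗ₜ[k] p.2) := by rw [map_sum]
    _ = ∑ p ∈ s, Φ ((TensorProduct.assoc k M H H).symm
          (p.1 ⊗ₜ[k] Coalgebra.comul (R := k) p.2)) := by
        rw [coassoc_elem ρ hs, map_sum, map_sum]
    _ = ∑ p ∈ s, (ρ.act p.1 (Sa p.2)) ⊗ₜ[k] (1 : H) :=
        Finset.sum_congr rfl fun p _ => key p
    _ = RightHopfModule.Emap ρ m ⊗ₜ[k] (1 : H) := by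
        rw [Emap_eq ρ hs, sum_tmul]

end Mod
end HopfAux

/-- For a right `H`-Hopf module `M`, the composite
`M^co(H) → M → M/MH⁺` of the inclusion with the quotient map is a linear isomorphism, with
inverse induced by `E_M : m ↦ m₍₀₎.S(m₍₁₎)`  (namely: `E_M` takes values in `M^co(H)`, descends
to the quotient since `E_M(m)` and `m` have the same class, and restricts to the identity on
`M^co(H)`). -/
theorem stmt3 (k : Type) [Field k] (H : Type) [Ring H] [HopfAlgebra k H]
    (hS : Function.Bijective (HopfAlgebra.antipode (R := k) (A := H)))
    (M : Type) [AddCommGroup M] [Module k M] (ρ : RightHopfModule k H M) :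
    Function.Bijective
      ((RightHopfModule.MHplus ρ).mkQ ∘ₗ (RightHopfModule.coinv ρ).subtype)
    ∧ (∀ m : M, ρ.coact (RightHopfModule.Emap ρ m)
        = RightHopfModule.Emap ρ m ⊗ₜ[k] (1 : H))
    ∧ (∀ m : M, (RightHopfModule.MHplus ρ).mkQ (RightHopfModule.Emap ρ m)
        = (RightHopfModule.MHplus ρ).mkQ m)
    ∧ (∀ m : M, ρ.coact m = m ⊗ₜ[k] (1 : H) → RightHopfModule.Emap ρ m = m) := by
  have coinv_iff : ∀ m : M, m ∈ RightHopfModule.coinv ρ ↔ ρ.coact m = m ⊗ₜ[k] (1 : H) := by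
    intro m
    rw [RightHopfModule.coinv, LinearMap.mem_ker, LinearMap.sub_apply, sub_eq_zero]
    exact ⟨fun h => h, fun h => h⟩
  have part2 : ∀ m : M, ρ.coact (RightHopfModule.Emap ρ m)
      = RightHopfModule.Emap ρ m ⊗ₜ[k] (1 : H) := fun m => HopfAux.Emap_coact ρ m
  have part3 : ∀ m : M, (RightHopfModule.MHplus ρ).mkQ (RightHopfModule.Emap ρ m)
      = (RightHopfModule.MHplus ρ).mkQ m := by
    intro m
    rw [Submodule.mkQ_apply, Submodule.mkQ_apply, Submodule.Quotient.eq]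
    exact HopfAux.Emap_sub_mem ρ m
  have part4 : ∀ m : M, ρ.coact m = m ⊗ₜ[k] (1 : H) → RightHopfModule.Emap ρ m = m :=
    fun m hm => HopfAux.Emap_coinv ρ hm
  refine ⟨⟨?_, ?_⟩, part2, part3, part4⟩
  · intro x y hxy
    simp only [LinearMap.comp_apply, Submodule.subtype_apply, Submodule.mkQ_apply,
      Submodule.Quotient.eq] at hxy
    have hE : RightHopfModule.Emap ρ ((x : M) - (y : M)) = 0 :=
      HopfAux.Emap_MHplus_zero ρ hxy
    rw [map_sub, HopfAux.Emap_coinv ρ ((coinv_iff x).mp x.2),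
      HopfAux.Emap_coinv ρ ((coinv_iff y).mp y.2), sub_eq_zero] at hE
    exact Subtype.ext hE
  · intro q
    obtain ⟨m, rfl⟩ := Submodule.mkQ_surjective _ q
    refine ⟨⟨RightHopfModule.Emap ρ m, (coinv_iff _).mpr (part2 m)⟩, ?_⟩
    simp only [LinearMap.comp_apply, Submodule.subtype_apply, part3 m]
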